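/- Let F be a cumulative distribution function with hazard rate h on [t₀,∞) satisfying condition (BasicH). Let K be a cumulative distribution function on ℝ such that K̄(t) ≤ M·F̄(t) for some M > 0 and all t large enough (i.e. K̄ = O(F̄)). Then for all nonnegative integers j and n, t^n · ∫_{[t/2,∞)} x^j dK(x) → 0 as t → ∞. -/

import Mathlib

/-!
Since `t·h(t) → ∞`, the cumulative hazard eventually grows faster than `q·log t` for every `q`,
so `F̄(t) = O(t^{-q})` for every `q`, and hence so is `K̄`. By the layer-cake formula
`∫ x^p dK = p ∫ t^{p-1} K̄(t) dt`, all positive moments of `K` are then finite. Finally, on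
`[t/2, ∞)` one has `t^{n+1} ≤ (2x)^{n+1}`, so `t^n ∫_{[t/2,∞)} x^j dK(x)` is at most `2^{n+1}/t`
times the moment of order `j + n + 1`.
-/

open MeasureTheory Filter Set

noncomputable section

/-- `h` is a hazard rate for the upper tail of `F` on `[t₀, ∞)`:
`F̄(t₀) > 0`, `h` is nonnegative and locally integrable on `[t₀, ∞)`, and
`F̄(t) = F̄(t₀) · exp(−∫_{t₀}^t h(u) du)` for all `t ≥ t₀`. -/
def HasHazardRate (F h : ℝ → ℝ) (t₀ : ℝ) : Prop :=
  0 < 1 - F t₀ ∧ (∀ t, t₀ ≤ t → 0 ≤ h t) ∧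
    MeasureTheory.LocallyIntegrableOn h (Set.Ici t₀) ∧
    ∀ t, t₀ ≤ t → 1 - F t = (1 - F t₀) * Real.exp (-(∫ u in t₀..t, h u))

/-- `g`, positive on a neighborhood of `∞`, is regularly varying of index `ρ`:
for every `a > 0`, `g(at)/g(t) → a^ρ` as `t → ∞`. -/
def RegularlyVarying (g : ℝ → ℝ) (ρ : ℝ) : Prop :=
  (∀ᶠ t in Filter.atTop, 0 < g t) ∧
    ∀ a : ℝ, 0 < a →
      Filter.Tendsto (fun t => g (a * t) / g t) Filter.atTop (nhds (a ^ ρ))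

/-- `g` is smoothly varying of index `α` and order `m`: `g` is `m` times continuously
differentiable on a neighborhood of `∞` and `g^(m)` is regularly varying of index `α − m`. -/
def SmoothlyVarying (g : ℝ → ℝ) (α : ℝ) (m : ℕ) : Prop :=
  (∃ T : ℝ, ContDiffOn ℝ (m : ℕ∞) g (Set.Ici T)) ∧
    RegularlyVarying (iteratedDeriv m g) (α - m)

/-- Condition (BasicH): `h` is regularly varying of some index, `t·h(t) → ∞`
and `h(t) → 0` as `t → ∞`. -/
def BasicH (h : ℝ → ℝ) : Prop :=
  (∃ ρ : ℝ, RegularlyVarying h ρ) ∧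
    Filter.Tendsto (fun t => t * h t) Filter.atTop Filter.atTop ∧
    Filter.Tendsto h Filter.atTop (nhds 0)

/-- `F` is a cumulative distribution function on `ℝ`. -/
def IsCDF (F : ℝ → ℝ) : Prop :=
  Monotone F ∧ (∀ x, ContinuousWithinAt F (Set.Ici x) x) ∧
    Filter.Tendsto F Filter.atBot (nhds 0) ∧ Filter.Tendsto F Filter.atTop (nhds 1)

open Asymptotics
open scoped ENNReal

theorem mul_log_div_le_intervalIntegral {f : ℝ → ℝ} {a b q : ℝ} (ha : 0 < a) (hab : a ≤ b)
    (hf : IntervalIntegrable f volume a b) (hq : ∀ u ∈ Icc a b, q ≤ u * f u) :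
    q * Real.log (b / a) ≤ ∫ u in a..b, f u := by
  have h0 : (0 : ℝ) ∉ uIcc a b := by
    rw [uIcc_of_le hab]
    exact fun h => ha.not_ge h.1
  rw [← integral_inv h0, ← intervalIntegral.integral_const_mul]
  refine intervalIntegral.integral_mono_on hab ((intervalIntegral.intervalIntegrable_inv
    (fun u hu => ?_) continuousOn_id).const_mul q) hf fun u hu => ?_
  · rw [uIcc_of_le hab] at hu
    exact (ha.trans_le hu.1).ne'
  · rw [← div_eq_mul_inv, div_le_iff₀ (ha.trans_le hu.1), mul_comm]
    exact hq u hu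

namespace HasHazardRate

variable {F h : ℝ → ℝ} {t₀ : ℝ}

theorem intervalIntegrable (hh : HasHazardRate F h t₀) {a b : ℝ} (ha : t₀ ≤ a) (hab : a ≤ b) :
    IntervalIntegrable h volume a b :=
  (intervalIntegrable_iff_integrableOn_Icc_of_le hab).2 <|
    hh.2.2.1.integrableOn_compact_subset (fun _ hx => ha.trans hx.1) isCompact_Icc

theorem tail_nonneg (hh : HasHazardRate F h t₀) {t : ℝ} (ht : t₀ ≤ t) : 0 ≤ 1 - F t := by
  rw [hh.2.2.2 t ht]
  exact mul_nonneg hh.1.le (Real.exp_pos _).le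

theorem isBigO_rpow_neg (hh : HasHazardRate F h t₀)
    (hth : Tendsto (fun t => t * h t) atTop atTop) (q : ℝ) :
    (fun t => 1 - F t) =O[atTop] fun t => t ^ (-q) := by
  obtain ⟨t₁, ht₁⟩ := eventually_atTop.1 (hth.eventually_ge_atTop q)
  set s := max t₁ (max t₀ 1)
  have hs₀ : t₀ ≤ s := (le_max_left _ _).trans (le_max_right _ _)
  have hs : 0 < s := one_pos.trans_le ((le_max_right _ _).trans (le_max_right _ _))
  refine IsBigO.of_bound ((1 - F t₀) * s ^ q) ?_
  filter_upwards [eventually_ge_atTop s] with t hst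
  have ht : 0 < t := hs.trans_le hst
  have hlog : q * Real.log (t / s) ≤ ∫ u in t₀..t, h u := by
    rw [← intervalIntegral.integral_add_adjacent_intervals
      (hh.intervalIntegrable le_rfl hs₀) (hh.intervalIntegrable hs₀ hst)]
    have hhead : 0 ≤ ∫ u in t₀..s, h u :=
      intervalIntegral.integral_nonneg hs₀ fun u hu => hh.2.1 u hu.1
    have htail := mul_log_div_le_intervalIntegral hs hst (hh.intervalIntegrable hs₀ hst)
      fun u hu => ht₁ u ((le_max_left _ _).trans hu.1)
    linarith
  rw [Real.norm_of_nonneg (hh.tail_nonneg (hs₀.trans hst)),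
    Real.norm_of_nonneg (Real.rpow_nonneg ht.le _), hh.2.2.2 t (hs₀.trans hst)]
  calc (1 - F t₀) * Real.exp (-∫ u in t₀..t, h u)
      ≤ (1 - F t₀) * Real.exp (Real.log (t / s) * -q) := by
        gcongr
        · exact hh.1.le
        · linarith
    _ = (1 - F t₀) * s ^ q * t ^ (-q) := by
        rw [← Real.rpow_def_of_pos (div_pos ht hs), Real.div_rpow ht.le hs.le,
          Real.rpow_neg hs.le, div_inv_eq_mul]
        ring

end HasHazardRate

theorem lintegral_Ici_zero_rpow_lt_top_of_isBigO {μ : Measure ℝ} [IsFiniteMeasure μ] {p q : ℝ}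
    (hp : 0 < p) (hpq : p < q)
    (htail : (fun t => (μ (Ioi t)).toReal) =O[atTop] fun t => t ^ (-q)) :
    ∫⁻ x in Ici 0, ENNReal.ofReal (x ^ p) ∂μ < ∞ := by
  obtain ⟨C, hC⟩ := htail.bound
  obtain ⟨T, hT⟩ := eventually_atTop.1 (hC.and (eventually_gt_atTop 0))
  have hT0 : 0 < T := (hT T le_rfl).2
  have hrestrict : ∀ t, μ.restrict (Ici 0) {x | t < x} ≤ μ (Ioi t) := fun t =>
    Measure.restrict_le_self _
  rw [lintegral_rpow_eq_lintegral_meas_lt_mul (μ.restrict (Ici 0)) (f := fun x => x)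
    (ae_restrict_mem measurableSet_Ici) aemeasurable_id hp, ← Ioc_union_Ioi_eq_Ioi hT0.le]
  refine ENNReal.mul_lt_top ENNReal.ofReal_lt_top <|
    (lintegral_union_le _ _ _).trans_lt (ENNReal.add_lt_top.2 ⟨?_, ?_⟩)
  · calc _ ≤ ∫⁻ t in Ioc 0 T, ENNReal.ofReal ((μ univ).toReal * t ^ (p - 1)) := by
          refine setLIntegral_mono' measurableSet_Ioc fun t _ => ?_
          rw [ENNReal.ofReal_mul ENNReal.toReal_nonneg, ENNReal.ofReal_toReal (measure_ne_top μ _)]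
          gcongr ?_ * _
          exact (hrestrict t).trans (measure_mono (subset_univ _))
      _ < ∞ := IntegrableOn.setLIntegral_lt_top
          ((intervalIntegral.intervalIntegrable_rpow' (r := p - 1) (by linarith)).1.const_mul _)
  · calc _ ≤ ∫⁻ t in Ioi T, ENNReal.ofReal (C * t ^ (p - 1 - q)) := by
          refine setLIntegral_mono' measurableSet_Ioi fun t ht => ?_
          have ht0 : 0 < t := hT0.trans ht
          have hbound := (hT t ht.le).1
          rw [Real.norm_of_nonneg ENNReal.toReal_nonneg,
            Real.norm_of_nonneg (Real.rpow_nonneg ht0.le _)] at hbound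
          rw [show p - 1 - q = -q + (p - 1) by ring, Real.rpow_add ht0, ← mul_assoc,
            ENNReal.ofReal_mul' (Real.rpow_nonneg ht0.le _)]
          gcongr ?_ * _
          exact (hrestrict t).trans (ENNReal.ofReal_toReal (measure_ne_top μ _) ▸
            ENNReal.ofReal_le_ofReal hbound)
      _ < ∞ := IntegrableOn.setLIntegral_lt_top
          ((integrableOn_Ioi_rpow_of_lt (a := p - 1 - q) (by linarith) hT0).const_mul C)

theorem tendsto_pow_mul_lintegral_Ici_half {μ : Measure ℝ} {j n : ℕ}
    (hmoment : ∫⁻ x in Ici 0, ENNReal.ofReal (x ^ (j + n + 1)) ∂μ < ∞) :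
    Tendsto (fun t : ℝ => ENNReal.ofReal (t ^ n) * ∫⁻ x in Ici (t / 2), ENNReal.ofReal (x ^ j) ∂μ)
      atTop (nhds 0) := by
  set I := ∫⁻ x in Ici 0, ENNReal.ofReal (x ^ (j + n + 1)) ∂μ
  have hbound : ∀ᶠ t in atTop, ENNReal.ofReal (t ^ n) *
      ∫⁻ x in Ici (t / 2), ENNReal.ofReal (x ^ j) ∂μ ≤ ENNReal.ofReal (2 ^ (n + 1) / t) * I := by
    filter_upwards [eventually_gt_atTop 0] with t ht
    calc ENNReal.ofReal (t ^ n) * ∫⁻ x in Ici (t / 2), ENNReal.ofReal (x ^ j) ∂μ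
        = ∫⁻ x in Ici (t / 2), ENNReal.ofReal (t ^ n) * ENNReal.ofReal (x ^ j) ∂μ :=
          (lintegral_const_mul' _ _ ENNReal.ofReal_ne_top).symm
      _ ≤ ∫⁻ x in Ici (t / 2),
            ENNReal.ofReal (2 ^ (n + 1) / t) * ENNReal.ofReal (x ^ (j + n + 1)) ∂μ := by
          refine setLIntegral_mono' measurableSet_Ici fun x hx => ?_
          have hx0 : 0 ≤ x := (half_pos ht).le.trans hx
          rw [← ENNReal.ofReal_mul (by positivity), ← ENNReal.ofReal_mul (by positivity)]
          refine ENNReal.ofReal_le_ofReal ?_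
          have hpow : t ^ (n + 1) ≤ (2 * x) ^ (n + 1) :=
            pow_le_pow_left₀ ht.le (by linarith [mem_Ici.1 hx]) _
          rw [div_mul_eq_mul_div, le_div_iff₀ ht]
          calc t ^ n * x ^ j * t = t ^ (n + 1) * x ^ j := by ring
            _ ≤ (2 * x) ^ (n + 1) * x ^ j := by gcongr
            _ = 2 ^ (n + 1) * x ^ (j + n + 1) := by ring
      _ ≤ ∫⁻ x in Ici 0,
            ENNReal.ofReal (2 ^ (n + 1) / t) * ENNReal.ofReal (x ^ (j + n + 1)) ∂μ :=
          lintegral_mono_set (Ici_subset_Ici.2 (half_pos ht).le)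
      _ = ENNReal.ofReal (2 ^ (n + 1) / t) * I := lintegral_const_mul' _ _ ENNReal.ofReal_ne_top
  have hlim : Tendsto (fun t : ℝ => ENNReal.ofReal (2 ^ (n + 1) / t) * I) atTop (nhds 0) := by
    rw [← zero_mul I, ← ENNReal.ofReal_zero]
    exact ENNReal.Tendsto.mul_const (ENNReal.tendsto_ofReal
      (tendsto_const_nhds.div_atTop tendsto_id)) (Or.inr hmoment.ne)
  exact tendsto_of_tendsto_of_tendsto_of_le_of_le' tendsto_const_nhds hlim
    (Eventually.of_forall fun _ => zero_le) hbound

theorem stmt_11_general (F h : ℝ → ℝ) (t₀ : ℝ)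
    (hh : HasHazardRate F h t₀) (hb : BasicH h)
    (μK : Measure ℝ) [IsProbabilityMeasure μK]
    (M : ℝ)
    (hK : ∀ᶠ t in Filter.atTop, (μK (Set.Ioi t)).toReal ≤ M * (1 - F t)) :
    ∀ j n : ℕ,
      Filter.Tendsto
        (fun t : ℝ => ENNReal.ofReal (t ^ n) * ∫⁻ x in Set.Ici (t / 2), ENNReal.ofReal (x ^ j) ∂μK)
        Filter.atTop (nhds 0) := by
  intro j n
  have hKF : (fun t => (μK (Ioi t)).toReal) =O[atTop] fun t => 1 - F t := by
    refine IsBigO.of_bound M ?_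
    filter_upwards [hK, eventually_ge_atTop t₀] with t hKt ht
    rwa [Real.norm_of_nonneg ENNReal.toReal_nonneg, Real.norm_of_nonneg (hh.tail_nonneg ht)]
  have hmoment := lintegral_Ici_zero_rpow_lt_top_of_isBigO (p := ((j + n + 1 : ℕ) : ℝ))
    (q := j + n + 2) (by positivity) (by push_cast; linarith)
    (hKF.trans (hh.isBigO_rpow_neg hb.2.1 _))
  simp only [Real.rpow_natCast] at hmoment
  exact tendsto_pow_mul_lintegral_Ici_half hmoment

/-- if `h` satisfies (BasicH) and `K̄ = O(F̄)`, then for all nonnegative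
integers `j`, `n`, one has `t^n · ∫_{[t/2,∞)} x^j dK(x) → 0` as `t → ∞`. -/
theorem stmt_11 (F h : ℝ → ℝ) (t₀ : ℝ) (hF : IsCDF F)
    (hh : HasHazardRate F h t₀) (hb : BasicH h)
    (μK : Measure ℝ) [IsProbabilityMeasure μK]
    (M : ℝ) (hM : 0 < M)
    (hK : ∀ᶠ t in Filter.atTop, (μK (Set.Ioi t)).toReal ≤ M * (1 - F t)) :
    ∀ j n : ℕ,
      Filter.Tendsto
        (fun t : ℝ => ENNReal.ofReal (t ^ n) * ∫⁻ x in Set.Ici (t / 2), ENNReal.ofReal (x ^ j) ∂μK)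
        Filter.atTop (nhds 0) :=
  stmt_11_general F h t₀ hh hb μK M hK
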